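/- Let X be a set and σ: X → X a map with proper forward orbits, meaning that for every x ∈ X and every finite subset F ⊆ X, the set {n ∈ ℕ : σ^n(x) ∈ F} is finite. Let a: X → ℕ be finitely supported. Then for every n ≥ ‖a‖₁ · ‖t(a)‖₁, the function s_n(a) takes values in {0,1}. -/

import Mathlib

/-- ℓ¹-norm of an ℕ-valued 0-chain: `‖a‖₁ = Σ_x a x`. -/
noncomputable def l1Norm {X : Type*} (a : X →₀ ℕ) : ℕ := a.sum fun _ n => n

/-- ℓ¹-distance `‖a - b‖₁ = Σ_x |a x - b x|` (with `|a x - b x|` computed via truncated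
subtraction on ℕ as `(a x - b x) + (b x - a x)`). -/
noncomputable def l1Dist {X : Type*} (a b : X →₀ ℕ) : ℕ := l1Norm ((a - b) + (b - a))

/-- `a ∧ b`: the pointwise minimum of two ℕ-valued 0-chains. -/
noncomputable def chainMin {X : Type*} (a b : X →₀ ℕ) : X →₀ ℕ :=
  Finsupp.zipWith min (min_self 0) a b

/-- `b(a)`: the characteristic function of the support of `a`. -/
noncomputable def bChain {X : Type*} (a : X →₀ ℕ) : X →₀ ℕ :=
  Finsupp.onFinset a.support (fun x => if a x = 0 then 0 else 1)
    (fun x h => Finsupp.mem_support_iff.mpr (by intro hx; simp [hx] at h))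

/-- `t(a) := a - b(a)`. -/
noncomputable def tChain {X : Type*} (a : X →₀ ℕ) : X →₀ ℕ := a - bChain a

/-- The flow map `s₁`: `s₁(a)(x) = b(a)(x) + Σ_{y : σ y = x} t(a)(y)`. -/
noncomputable def flowStep {X : Type*} (σ : X → X) (a : X →₀ ℕ) : X →₀ ℕ :=
  bChain a + (tChain a).sum fun y n => Finsupp.single (σ y) n

/-! The flow `s₁` preserves `‖a‖₁` and never shrinks the support, so
`‖t(a)‖₁ = ‖a‖₁ - #supp a` never increases. If it stayed constant for `‖a‖₁` steps, the support
would be frozen and an excess unit at a point `y` with `a y ≥ 2` would be pushed along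
`y, σ y, σ² y, …` without leaving it; as `#supp a ≤ ‖a‖₁`, the orbit of `y` would repeat a point,
so `y` would be preperiodic, which proper forward orbits forbid. Hence `‖t‖₁` drops at least once
every `‖a‖₁` steps and vanishes after `‖a‖₁ · ‖t(a)‖₁` of them. -/

open Finset Function

lemma injective_iterate_of_finite {X : Type*} {σ : X → X} {x : X}
    (hx : ∀ F : Finset X, {n : ℕ | σ^[n] x ∈ F}.Finite) : Injective fun n => σ^[n] x := by
  intro i j hij
  by_contra hne
  wlog hlt : i < j generalizing i j
  · exact this hij.symm (Ne.symm hne) (by omega)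
  have hper : IsPeriodicPt σ (j - i) (σ^[i] x) := by
    rw [IsPeriodicPt, IsFixedPt, ← iterate_add_apply, Nat.sub_add_cancel hlt.le]
    exact hij.symm
  refine Set.infinite_of_injective_forall_mem (f := fun k => (j - i) * k + i) ?_ ?_ (hx {σ^[i] x})
  · intro k l hkl
    simp only [add_left_inj, mul_eq_mul_left_iff] at hkl
    omega
  · intro k
    simp [iterate_add_apply, (hper.mul_const k).eq]

lemma Finsupp.le_mapDomain_apply {X Y M : Type*} [AddCommMonoid M] [PartialOrder M]
    [CanonicallyOrderedAdd M] (f : X → Y) (v : X →₀ M) (x : X) : v x ≤ v.mapDomain f (f x) := by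
  conv_rhs => rw [← single_add_erase x v]
  rw [mapDomain_add, mapDomain_single, add_apply, single_eq_same]
  exact le_self_add

lemma Antitone.eq_zero_of_lt_apply_add {f : ℕ → ℕ} (hf : Antitone f) {N : ℕ}
    (h : ∀ k, 0 < f k → f (k + N) < f k) {n : ℕ} (hn : N * f 0 ≤ n) : f n = 0 := by
  have hdecay : ∀ j, f (N * j) ≤ f 0 - j := by
    intro j
    induction j with
    | zero => simp
    | succ j ih =>
      rw [Nat.mul_succ]
      rcases Nat.eq_zero_or_pos (f (N * j)) with h0 | hpos
      · have := hf (Nat.le_add_right (N * j) N)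
        omega
      · have := h _ hpos
        omega
  have := hf hn
  have := hdecay (f 0)
  omega

section Flow

variable {X : Type*}

lemma l1Norm_add (a b : X →₀ ℕ) : l1Norm (a + b) = l1Norm a + l1Norm b :=
  map_add Finsupp.degree a b

lemma l1Norm_eq_zero_iff {a : X →₀ ℕ} : l1Norm a = 0 ↔ a = 0 :=
  Finsupp.degree_eq_zero_iff a

lemma bChain_apply (a : X →₀ ℕ) (x : X) : bChain a x = if a x = 0 then 0 else 1 := rfl

lemma tChain_apply (a : X →₀ ℕ) (x : X) : tChain a x = a x - 1 := by
  rw [tChain, Finsupp.tsub_apply, bChain_apply]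
  split_ifs <;> omega

lemma bChain_add_tChain (a : X →₀ ℕ) : bChain a + tChain a = a := by
  ext x
  rw [Finsupp.add_apply, bChain_apply, tChain_apply]
  split_ifs <;> omega

lemma l1Norm_bChain (a : X →₀ ℕ) : l1Norm (bChain a) = #a.support := by
  rw [l1Norm, bChain, Finsupp.onFinset_sum _ (fun _ => rfl), card_eq_sum_ones]
  exact sum_congr rfl fun x hx => if_neg (Finsupp.mem_support_iff.mp hx)

lemma card_support_add_l1Norm_tChain (a : X →₀ ℕ) : #a.support + l1Norm (tChain a) = l1Norm a := by
  rw [← l1Norm_bChain, ← l1Norm_add, bChain_add_tChain]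

variable (σ : X → X)

lemma flowStep_eq (a : X →₀ ℕ) : flowStep σ a = bChain a + (tChain a).mapDomain σ := rfl

lemma l1Norm_flowStep (a : X →₀ ℕ) : l1Norm (flowStep σ a) = l1Norm a := by
  rw [flowStep_eq, l1Norm_add, ← bChain_add_tChain a, l1Norm_add, bChain_add_tChain]
  exact congrArg _ (Finsupp.degree_mapDomain σ _)

lemma support_subset_support_flowStep (a : X →₀ ℕ) : a.support ⊆ (flowStep σ a).support := by
  intro x hx
  have : bChain a x ≤ flowStep σ a x := le_self_add
  rw [Finsupp.mem_support_iff] at hx ⊢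
  rw [bChain_apply, if_neg hx] at this
  omega

lemma bChain_add_tChain_le_flowStep (a : X →₀ ℕ) (y : X) :
    bChain a (σ y) + tChain a y ≤ flowStep σ a (σ y) :=
  add_le_add le_rfl (Finsupp.le_mapDomain_apply σ _ y)

lemma two_le_flowStep_apply {a : X →₀ ℕ} (hsupp : (flowStep σ a).support ⊆ a.support) {y : X}
    (hy : 2 ≤ a y) : 2 ≤ flowStep σ a (σ y) := by
  have hle := bChain_add_tChain_le_flowStep σ a y
  rw [tChain_apply] at hle
  have hmem : σ y ∈ a.support := hsupp (Finsupp.mem_support_iff.mpr (by omega))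
  rw [bChain_apply, if_neg (Finsupp.mem_support_iff.mp hmem)] at hle
  omega

lemma l1Norm_iterate_flowStep (a : X →₀ ℕ) (k : ℕ) :
    l1Norm ((flowStep σ)^[k] a) = l1Norm a := by
  induction k with
  | zero => rfl
  | succ k ih => rw [iterate_succ_apply', l1Norm_flowStep, ih]

lemma monotone_support_iterate_flowStep (a : X →₀ ℕ) :
    Monotone fun k => ((flowStep σ)^[k] a).support :=
  monotone_nat_of_le_succ fun k => by
    simpa only [iterate_succ_apply'] using support_subset_support_flowStep σ _

lemma antitone_l1Norm_tChain_iterate_flowStep (a : X →₀ ℕ) :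
    Antitone fun k => l1Norm (tChain ((flowStep σ)^[k] a)) := by
  intro k l hkl
  have hcard : #((flowStep σ)^[k] a).support ≤ #((flowStep σ)^[l] a).support :=
    card_le_card (monotone_support_iterate_flowStep σ a hkl)
  have hk := card_support_add_l1Norm_tChain ((flowStep σ)^[k] a)
  have hl := card_support_add_l1Norm_tChain ((flowStep σ)^[l] a)
  simp only [l1Norm_iterate_flowStep] at hk hl ⊢
  omega

lemma two_le_iterate_flowStep_apply {a : X →₀ ℕ} {n : ℕ}
    (hsupp : ∀ i ≤ n, ((flowStep σ)^[i] a).support ⊆ a.support) {y : X} (hy : 2 ≤ a y) :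
    ∀ i ≤ n, 2 ≤ (flowStep σ)^[i] a (σ^[i] y) := by
  intro i
  induction i with
  | zero => simpa using hy
  | succ i ih =>
    intro hi
    rw [iterate_succ_apply', iterate_succ_apply']
    refine two_le_flowStep_apply σ ?_ (ih (by omega))
    rw [← iterate_succ_apply' (flowStep σ)]
    exact (hsupp (i + 1) hi).trans (monotone_support_iterate_flowStep σ a (Nat.zero_le i))

lemma l1Norm_tChain_iterate_flowStep_lt
    (hproper : ∀ (x : X) (F : Finset X), {n : ℕ | σ^[n] x ∈ F}.Finite) {a : X →₀ ℕ}
    (ht : 0 < l1Norm (tChain a)) :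
    l1Norm (tChain ((flowStep σ)^[l1Norm a] a)) < l1Norm (tChain a) := by
  set N := l1Norm a
  by_contra! hge
  have hcard := card_support_add_l1Norm_tChain a
  have hsupp_N : ((flowStep σ)^[N] a).support = a.support := by
    have hN := card_support_add_l1Norm_tChain ((flowStep σ)^[N] a)
    rw [l1Norm_iterate_flowStep] at hN
    refine (eq_of_subset_of_card_le (s := a.support) (t := ((flowStep σ)^[N] a).support)
      (monotone_support_iterate_flowStep σ a (Nat.zero_le N)) ?_).symm
    omega
  have hsupp : ∀ i ≤ N, ((flowStep σ)^[i] a).support ⊆ a.support := fun i hi =>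
    hsupp_N ▸ monotone_support_iterate_flowStep σ a hi
  obtain ⟨y, hy⟩ : ∃ y, 2 ≤ a y := by
    obtain ⟨y, hy⟩ := Finsupp.ne_iff.mp (l1Norm_eq_zero_iff.not.mp ht.ne')
    rw [tChain_apply, Finsupp.coe_zero, Pi.zero_apply] at hy
    exact ⟨y, by omega⟩
  have horbit := two_le_iterate_flowStep_apply σ hsupp hy
  have hmaps : Set.MapsTo (fun i => σ^[i] y) (range (N + 1)) a.support := by
    intro i hi
    have hi : i ≤ N := Nat.lt_succ_iff.mp (mem_range.mp hi)
    exact hsupp i hi (Finsupp.mem_support_iff.mpr (zero_lt_two.trans_le (horbit i hi)).ne')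
  have := card_le_card_of_injOn _ hmaps (injective_iterate_of_finite (hproper y)).injOn
  rw [card_range] at this
  omega

end Flow

/-- If `σ` has proper forward orbits, then for every `n ≥ ‖a‖₁ ⬝ ‖t(a)‖₁` the 0-chain
`s_n(a)` takes values in `{0,1}`. -/
theorem flowIter_eventually_binary {X : Type*} (σ : X → X)
    (hproper : ∀ (x : X) (F : Finset X), {n : ℕ | σ^[n] x ∈ F}.Finite)
    (a : X →₀ ℕ) :
    ∀ n : ℕ, l1Norm a * l1Norm (tChain a) ≤ n →
      ∀ x : X, ((flowStep σ)^[n] a) x = 0 ∨ ((flowStep σ)^[n] a) x = 1 := by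
  intro n hn x
  have hdecay : ∀ k, 0 < l1Norm (tChain ((flowStep σ)^[k] a)) →
      l1Norm (tChain ((flowStep σ)^[k + l1Norm a] a)) < l1Norm (tChain ((flowStep σ)^[k] a)) := by
    intro k hk
    have := l1Norm_tChain_iterate_flowStep_lt σ hproper hk
    rwa [l1Norm_iterate_flowStep, ← iterate_add_apply, add_comm] at this
  have ht : tChain ((flowStep σ)^[n] a) = 0 := l1Norm_eq_zero_iff.mp <|
    (antitone_l1Norm_tChain_iterate_flowStep σ a).eq_zero_of_lt_apply_add hdecay hn
  have hx := DFunLike.congr_fun ht x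
  rw [tChain_apply, Finsupp.coe_zero, Pi.zero_apply] at hx
  omega
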